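/- A configuration c of K_n (with c(v) ≤ n−1 for all v) is volatile if and only if, when the chip counts are sorted in nonincreasing order as c₁ ≥ c₂ ≥ … ≥ c_n, we have c_i ≥ n−i for all i ∈ {1,…,n}. -/
import Mathlib


/-- Firing vertex `v` in `K_n`: remove `n-1` chips from `v`, add one chip to each other vertex. -/
def fireK (n : ℕ) (c : Fin n → ℕ) (v : Fin n) : Fin n → ℕ :=
  fun u => if u = v then c v - (n - 1) else c u + 1

/-- Configuration after firing `f 0, …, f (m-1)` in order in `K_n`. -/
def fireIterK (n : ℕ) (c : Fin n → ℕ) (f : ℕ → Fin n) : ℕ → Fin n → ℕ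
  | 0 => c
  | m + 1 => fireK n (fireIterK n c f m) (f m)

/-- A configuration of `K_n` is volatile if it admits an infinite legal firing sequence. -/
def VolatileK (n : ℕ) (c : Fin n → ℕ) : Prop :=
  ∃ f : ℕ → Fin n, ∀ m : ℕ, n - 1 ≤ fireIterK n c f m (f m)

/-- Configuration after firing a finite list of vertices in order in `K_n`. -/
def fireListK (n : ℕ) : (Fin n → ℕ) → List (Fin n) → (Fin n → ℕ)
  | c, [] => c
  | c, v :: l => fireListK n (fireK n c v) l

/-- A finite firing list in `K_n` is legal if each fired vertex has at least `n-1` chips. -/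
def LegalListK (n : ℕ) : (Fin n → ℕ) → List (Fin n) → Prop
  | _, [] => True
  | c, v :: l => n - 1 ≤ c v ∧ LegalListK n (fireK n c v) l

lemma fireK_self (n : ℕ) (c : Fin n → ℕ) (v : Fin n) :
    fireK n c v v = c v - (n - 1) := by simp [fireK]

lemma fireK_ne (n : ℕ) (c : Fin n → ℕ) (v u : Fin n) (h : u ≠ v) :
    fireK n c v u = c u + 1 := by simp [fireK, h]

lemma fireIterK_succ (n : ℕ) (c : Fin n → ℕ) (f : ℕ → Fin n) (m : ℕ) :
    fireIterK n c f (m + 1) = fireK n (fireIterK n c f m) (f m) := rfl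

/-- If `u` is never fired in the first `m` steps, it gains exactly one chip per step. -/
lemma fireIterK_not_fired (n : ℕ) (c : Fin n → ℕ) (f : ℕ → Fin n) (m : ℕ) (u : Fin n)
    (h : ∀ j < m, f j ≠ u) : fireIterK n c f m u = c u + m := by
  induction m with
  | zero => simp [fireIterK]
  | succ m ih =>
    have h1 : u ≠ f m := fun h' => h m (Nat.lt_succ_self m) h'.symm
    rw [fireIterK_succ, fireK_ne _ _ _ _ h1, ih (fun j hj => h j (Nat.lt_succ_of_lt hj))]
    omega

/-- If `u` is fired exactly once (at time `j`) among the first `m` steps. -/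
lemma fireIterK_fired_once (n : ℕ) (c : Fin n → ℕ) (f : ℕ → Fin n) (m j : ℕ) (u : Fin n)
    (hj : j < m) (hfj : f j = u) (h : ∀ k < m, k ≠ j → f k ≠ u) :
    fireIterK n c f m u = (c u + j - (n - 1)) + (m - 1 - j) := by
  induction m with
  | zero => omega
  | succ m ih =>
    rcases Nat.lt_or_ge j m with hlt | hge
    · have h1 : u ≠ f m := fun h' => h m (Nat.lt_succ_self m) (by omega) h'.symm
      rw [fireIterK_succ, fireK_ne _ _ _ _ h1,
        ih hlt (fun k hk hkj => h k (Nat.lt_succ_of_lt hk) hkj)]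
      omega
    · have hjm : j = m := by omega
      subst hjm
      have hval := fireIterK_not_fired n c f j u (fun k hk => h k (by omega) (by omega))
      rw [fireIterK_succ, hfj, fireK_self, hval]
      omega

lemma fireIterK_add (n : ℕ) (c : Fin n → ℕ) (f : ℕ → Fin n) (a m : ℕ) :
    fireIterK n c f (a + m) = fireIterK n (fireIterK n c f a) (fun k => f (a + k)) m := by
  induction m with
  | zero => rfl
  | succ m ih =>
    show fireIterK n c f ((a + m) + 1) = _
    rw [fireIterK_succ, ih]
    rfl

/-- The round formula: firing `σ 0, σ 1, …` in order. -/
lemma roundFormulaK (n : ℕ) (hn : 0 < n) (c : Fin n → ℕ) (σ : Equiv.Perm (Fin n))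
    (H : ∀ i : Fin n, n - 1 - (i : ℕ) ≤ c (σ i)) (r : ℕ) : r ≤ n → ∀ j : Fin n,
    fireIterK n c (fun m => σ ⟨m % n, Nat.mod_lt m hn⟩) r (σ j)
      = if (j : ℕ) < r then c (σ j) + r - n else c (σ j) + r := by
  induction r with
  | zero => intro _ j; simp [fireIterK]
  | succ r ih =>
    intro hr j
    have hrn : r < n := hr
    have hrr : r ≤ n := le_of_lt hrn
    have hfr : σ ⟨r % n, Nat.mod_lt r hn⟩ = σ ⟨r, hrn⟩ := by
      congr 1
      exact Fin.ext (Nat.mod_eq_of_lt hrn)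
    rw [fireIterK_succ, hfr]
    by_cases hj : (j : ℕ) = r
    · have hj' : j = ⟨r, hrn⟩ := Fin.ext hj
      subst hj'
      rw [fireK_self, ih hrr ⟨r, hrn⟩, if_neg (lt_irrefl r),
        if_pos (Nat.lt_succ_self r)]
      have := H ⟨r, hrn⟩
      simp only at this ⊢
      omega
    · have hne : σ j ≠ σ ⟨r, hrn⟩ := by
        intro hEq
        exact hj (congrArg Fin.val (σ.injective hEq))
      rw [fireK_ne _ _ _ _ hne, ih hrr j]
      have := H j
      by_cases hjr : (j : ℕ) < r
      · rw [if_pos hjr, if_pos (by omega)]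
        omega
      · rw [if_neg hjr, if_neg (by omega)]
        omega

/-- A configuration `c` of `K_n` with `c(v) ≤ n-1` for all `v` is volatile if
and only if its chip counts, sorted nonincreasingly via a permutation `σ`, satisfy
`cᵢ ≥ n - i` (0-indexed: `c (σ i) ≥ n - 1 - i`) for all `i`. -/
theorem stmt13 (n : ℕ) (hn : 1 ≤ n) (c : Fin n → ℕ) (hc : ∀ v, c v ≤ n - 1)
    (σ : Equiv.Perm (Fin n)) (hσ : Antitone (fun i => c (σ i))) :
    VolatileK n c ↔ ∀ i : Fin n, n - 1 - (i : ℕ) ≤ c (σ i) := by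
  have hn' : 0 < n := hn
  constructor
  · rintro ⟨f, hf⟩
    -- Step 1: the first `n` fired vertices are pairwise distinct.
    have inj : ∀ i < n, ∀ j < i, f j ≠ f i := by
      intro i
      induction i using Nat.strong_induction_on with
      | _ i IH =>
        intro hi j hji hEq
        have hdist : ∀ a < i, ∀ b < a, f b ≠ f a := fun a ha => IH a ha (by omega)
        have huniq : ∀ k < i, k ≠ j → f k ≠ f i := by
          intro k hk hkj hEq2
          rcases Nat.lt_or_ge k j with h1 | h1
          · exact hdist j hji k h1 (hEq2.trans hEq.symm)
          · exact hdist k hk j (by omega) (hEq.trans hEq2.symm)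
        have hval := fireIterK_fired_once n c f i j (f i) hji hEq huniq
        have hleg := hf i
        rw [hval] at hleg
        have hcb := hc (f i)
        omega
    -- Step 2: legality at each of the first `n` steps gives chip lower bounds.
    have hstep : ∀ i < n, n - 1 ≤ c (f i) + i := by
      intro i hi
      have h := hf i
      rwa [fireIterK_not_fired n c f i (f i) (fun j hj => inj i hi j hj)] at h
    -- Step 3: counting argument to transfer to the sorted order.
    intro i
    by_contra hcon
    push_neg at hcon
    set t := n - 1 - (i : ℕ) with ht
    set T : Finset (Fin n) := Finset.univ.filter fun v => t ≤ c v with hT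
    have hub : T.card ≤ (i : ℕ) := by
      have hmaps : ∀ v ∈ T, (σ.symm v : ℕ) ∈ Finset.range (i : ℕ) := by
        intro v hv
        simp only [Finset.mem_range]
        by_contra hge
        push_neg at hge
        have hle : c (σ (σ.symm v)) ≤ c (σ i) := hσ (Fin.le_def.mpr hge)
        rw [σ.apply_symm_apply] at hle
        have : t ≤ c v := by
          have := hv
          simp only [hT, Finset.mem_filter] at this
          exact this.2
        omega
      have := Finset.card_le_card_of_injOn (fun v => (σ.symm v : ℕ)) hmaps
        (fun a _ b _ hab => σ.symm.injective (Fin.ext hab))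
      simpa using this
    have hlb : (i : ℕ) + 1 ≤ T.card := by
      have hmaps : ∀ m ∈ Finset.range ((i : ℕ) + 1), f m ∈ T := by
        intro m hm
        simp only [Finset.mem_range] at hm
        have hmn : m < n := lt_of_lt_of_le hm (Nat.succ_le_of_lt i.isLt)
        have := hstep m hmn
        simp only [hT, Finset.mem_filter, Finset.mem_univ, true_and]
        omega
      have hinj : Set.InjOn f (Finset.range ((i : ℕ) + 1)) := by
        intro a ha b hb hab
        simp only [Finset.coe_range, Set.mem_Iio] at ha hb
        have han : a < n := lt_of_lt_of_le ha (Nat.succ_le_of_lt i.isLt)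
        have hbn : b < n := lt_of_lt_of_le hb (Nat.succ_le_of_lt i.isLt)
        rcases Nat.lt_trichotomy a b with h | h | h
        · exact absurd hab (inj b hbn a h)
        · exact h
        · exact absurd hab.symm (inj a han b h)
      have := Finset.card_le_card_of_injOn f hmaps hinj
      simpa using this
    omega
  · -- Backward: fire `σ 0, σ 1, …, σ (n-1)` repeatedly.
    intro H
    refine ⟨fun m => σ ⟨m % n, Nat.mod_lt m hn'⟩, ?_⟩
    set f : ℕ → Fin n := fun m => σ ⟨m % n, Nat.mod_lt m hn'⟩ with hfdef
    have hround := roundFormulaK n hn' c σ H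
    have hcycle : fireIterK n c f n = c := by
      funext v
      obtain ⟨j, rfl⟩ := σ.surjective v
      rw [hround n le_rfl j, if_pos j.isLt]
      omega
    have hfshift : (fun k => f (n + k)) = f := by
      funext k
      simp only [hfdef]
      congr 1
      exact Fin.ext (Nat.add_mod_left n k)
    have hshift : ∀ s, fireIterK n c f (n + s) = fireIterK n c f s := by
      intro s
      rw [fireIterK_add, hcycle, hfshift]
    have hmodred : ∀ m, fireIterK n c f m = fireIterK n c f (m % n) := by
      intro m
      induction m using Nat.strong_induction_on with
      | _ m IH =>
        rcases Nat.lt_or_ge m n with h | h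
        · rw [Nat.mod_eq_of_lt h]
        · calc fireIterK n c f m = fireIterK n c f (n + (m - n)) := by
                have e : n + (m - n) = m := by omega
                rw [e]
            _ = fireIterK n c f (m - n) := hshift _
            _ = fireIterK n c f ((m - n) % n) := IH _ (by omega)
            _ = fireIterK n c f (m % n) := by rw [Nat.mod_eq_sub_mod h]
    intro m
    have hrlt : m % n < n := Nat.mod_lt m hn'
    have hfm : f m = σ ⟨m % n, hrlt⟩ := rfl
    rw [hmodred m, hfm, hround (m % n) (le_of_lt hrlt) ⟨m % n, hrlt⟩,
      if_neg (lt_irrefl _)]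
    have h2 : n - 1 - m % n ≤ c (σ ⟨m % n, hrlt⟩) := H ⟨m % n, hrlt⟩
    omega
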